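/- arXiv:2103.00558 — 2 statements merged into one kernel-verified Lean document; each statement's English description precedes it below -/
import Mathlib

section
/- Let P ⊂ ℝᵈ be finite with optimal clusters C₁*,…,C_k* (with means oⱼ*) forming P_opt ⊆ P, |P_opt| = n − z. Suppose: (a) Σⱼ Σ_{q ∈ S∩Cⱼ*}‖q − oⱼ*‖² ≤ (1+δ)(|S|/n)(n−z)(Δ + ξL²) where Δ = Δ₂^{−z}(P, O*); (b) Cost(S̃_opt, H) ≤ (2+2c)·Cost(S_opt, O*); (c) Cost(P̃_opt, H) ≤ (1/(1−δ))·(n/|S|)·Cost(S̃_opt, H). Then Δ₂^{−z}(P, H) ≤ (2 + (4+4c)·(1+δ)/(1−δ))·Δ + (4+4c)·((1+δ)/(1−δ))·ξL². -/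
/-!
Push the sample bound through the approximation guarantee and rescale from the sample `S` to
all of `P_opt`: the factor `|S| / n` of the sample cost cancels against the factor `n / |S|` of
the size concentration, so `Cost(P̃_opt, H) ≤ (2 + 2c)·(1+δ)/(1−δ)·(n − z)(Δ + ξL²)`.
The relaxed triangle inequality `Cost(P_opt, H) ≤ 2 Cost(P_opt, O*) + 2 Cost(P̃_opt, H)` and
`Cost(P_opt, O*) = (n − z)Δ` then bound `(n − z)·Δ₂^{−z}(P, H)`; divide by `n − z > 0`.
-/

lemma star_cost_le_of_sample_bounds {c δ s n m X A B B' : ℝ}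
    (hc : -1 ≤ c) (hδ : δ < 1) (hs : 0 < s) (hn : 0 < n)
    (hA : A ≤ (1 + δ) * (s / n) * m * X) (hB : B ≤ (2 + 2 * c) * A)
    (hB' : B' ≤ 1 / (1 - δ) * (n / s) * B) :
    B' ≤ (2 + 2 * c) * ((1 + δ) / (1 - δ)) * m * X := by
  have h1δ : 0 < 1 - δ := by linarith
  calc B' ≤ 1 / (1 - δ) * (n / s) * ((2 + 2 * c) * ((1 + δ) * (s / n) * m * X)) := by
        refine hB'.trans ?_
        gcongr
        exact hB.trans (by gcongr; linarith)
    _ = (2 + 2 * c) * ((1 + δ) / (1 - δ)) * m * X := by field_simp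

lemma le_of_mul_le_relaxed_triangle {m x D E B' Δ K Y : ℝ} (hm : 0 < m)
    (hD : m * x ≤ D) (hE : D ≤ 2 * E + 2 * B') (hEΔ : E = m * Δ) (hB' : B' ≤ K * m * Y) :
    x ≤ 2 * Δ + 2 * K * Y := by
  refine le_of_mul_le_mul_left ?_ hm
  calc m * x ≤ 2 * (m * Δ) + 2 * (K * m * Y) := by linarith
    _ = m * (2 * Δ + 2 * K * Y) := by ring

open Finset Metric

theorem stmt_14_general {d : ℕ} [DecidableEq (EuclideanSpace ℝ (Fin d))] (k n z : ℕ)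
    (C : Fin k → Finset (EuclideanSpace ℝ (Fin d)))
    (o : Fin k → EuclideanSpace ℝ (Fin d))
    (S H : Finset (EuclideanSpace ℝ (Fin d)))
    (c δ ξ L Δ ΔPH : ℝ)
    (hc : 1 ≤ c) (hδ : δ ∈ Set.Ioo (0 : ℝ) 1)
    (hz : z < n) (hScard : 0 < S.card)
    (ha : ∑ j, ∑ q ∈ S ∩ C j, (dist q (o j)) ^ 2 ≤
      (1 + δ) * ((S.card : ℝ) / n) * ((n : ℝ) - z) * (Δ + ξ * L ^ 2))
    (hb : ∑ j, ((S ∩ C j).card : ℝ) *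
          (Metric.infDist (o j) (H : Set (EuclideanSpace ℝ (Fin d)))) ^ 2 ≤
        (2 + 2 * c) * ∑ j, ∑ q ∈ S ∩ C j, (dist q (o j)) ^ 2)
    (hc' : ∑ j, ((C j).card : ℝ) *
          (Metric.infDist (o j) (H : Set (EuclideanSpace ℝ (Fin d)))) ^ 2 ≤
        (1 / (1 - δ)) * ((n : ℝ) / S.card) *
          ∑ j, ((S ∩ C j).card : ℝ) *
            (Metric.infDist (o j) (H : Set (EuclideanSpace ℝ (Fin d)))) ^ 2)
    (hd : ((n : ℝ) - z) * ΔPH ≤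
        ∑ j, ∑ p ∈ C j, (Metric.infDist p (H : Set (EuclideanSpace ℝ (Fin d)))) ^ 2)
    (he : ∑ j, ∑ p ∈ C j, (Metric.infDist p (H : Set (EuclideanSpace ℝ (Fin d)))) ^ 2 ≤
        2 * ∑ j, ∑ p ∈ C j, (dist p (o j)) ^ 2 +
          2 * ∑ j, ((C j).card : ℝ) *
            (Metric.infDist (o j) (H : Set (EuclideanSpace ℝ (Fin d)))) ^ 2)
    (hf : ∑ j, ∑ p ∈ C j, (dist p (o j)) ^ 2 = ((n : ℝ) - z) * Δ) :
    ΔPH ≤ (2 + (4 + 4 * c) * ((1 + δ) / (1 - δ))) * Δ +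
      (4 + 4 * c) * ((1 + δ) / (1 - δ)) * ξ * L ^ 2 := by
  have hzn : (z : ℝ) < n := by exact_mod_cast hz
  have hm : (0 : ℝ) < n - z := sub_pos.mpr hzn
  have hstar := star_cost_le_of_sample_bounds (by linarith) hδ.2
    (by exact_mod_cast hScard) (by linarith [(z.cast_nonneg : (0 : ℝ) ≤ z)]) ha hb hc'
  have hbound := le_of_mul_le_relaxed_triangle hm hd he hf hstar
  linear_combination hbound

/-- deterministic assembly step of Theorem 10: from the sample
cost bound (a), the black-box approximation bound (b), the size-concentration
bound (c), together with `(n−z)Δ₂^{−z}(P,H) ≤ Cost(P_opt,H)` (d), the squared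
triangle relaxation (e), and `Cost(P_opt,O*) = (n−z)Δ` (f), conclude
`Δ₂^{−z}(P,H) ≤ (2 + (4+4c)(1+δ)/(1−δ))Δ + (4+4c)((1+δ)/(1−δ))ξL²`. -/
theorem stmt_14 {d : ℕ} [DecidableEq (EuclideanSpace ℝ (Fin d))] (k n z : ℕ)
    (C : Fin k → Finset (EuclideanSpace ℝ (Fin d)))
    (o : Fin k → EuclideanSpace ℝ (Fin d))
    (S H : Finset (EuclideanSpace ℝ (Fin d))) (hH : H.Nonempty)
    (c δ ξ L Δ ΔPH : ℝ)
    (hc : 1 ≤ c) (hδ : δ ∈ Set.Ioo (0 : ℝ) 1) (hξ : ξ ∈ Set.Ioo (0 : ℝ) 1)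
    (hL : 0 ≤ L) (hΔ : 0 ≤ Δ)
    (hz : z < n) (hScard : 0 < S.card)
    (ha : ∑ j, ∑ q ∈ S ∩ C j, (dist q (o j)) ^ 2 ≤
      (1 + δ) * ((S.card : ℝ) / n) * ((n : ℝ) - z) * (Δ + ξ * L ^ 2))
    (hb : ∑ j, ((S ∩ C j).card : ℝ) *
          (Metric.infDist (o j) (H : Set (EuclideanSpace ℝ (Fin d)))) ^ 2 ≤
        (2 + 2 * c) * ∑ j, ∑ q ∈ S ∩ C j, (dist q (o j)) ^ 2)
    (hc' : ∑ j, ((C j).card : ℝ) *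
          (Metric.infDist (o j) (H : Set (EuclideanSpace ℝ (Fin d)))) ^ 2 ≤
        (1 / (1 - δ)) * ((n : ℝ) / S.card) *
          ∑ j, ((S ∩ C j).card : ℝ) *
            (Metric.infDist (o j) (H : Set (EuclideanSpace ℝ (Fin d)))) ^ 2)
    (hd : ((n : ℝ) - z) * ΔPH ≤
        ∑ j, ∑ p ∈ C j, (Metric.infDist p (H : Set (EuclideanSpace ℝ (Fin d)))) ^ 2)
    (he : ∑ j, ∑ p ∈ C j, (Metric.infDist p (H : Set (EuclideanSpace ℝ (Fin d)))) ^ 2 ≤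
        2 * ∑ j, ∑ p ∈ C j, (dist p (o j)) ^ 2 +
          2 * ∑ j, ((C j).card : ℝ) *
            (Metric.infDist (o j) (H : Set (EuclideanSpace ℝ (Fin d)))) ^ 2)
    (hf : ∑ j, ∑ p ∈ C j, (dist p (o j)) ^ 2 = ((n : ℝ) - z) * Δ) :
    ΔPH ≤ (2 + (4 + 4 * c) * ((1 + δ) / (1 - δ))) * Δ +
      (4 + 4 * c) * ((1 + δ) / (1 - δ)) * ξ * L ^ 2 :=
  stmt_14_general k n z C o S H c δ ξ L Δ ΔPH hc hδ hz hScard ha hb hc' hd he hf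
end

section
/- Suppose a finite sample S from P satisfies: (i) S can be covered by k + k′ balls of radius r_opt, and (ii) running a 2-approximation algorithm for (k+k′)-center on S returns centers H with covering radius r ≤ 2·r_opt; and (iii) S intersects every optimal cluster Cⱼ*, each of which lies in a ball of radius r_opt. Then Δ_∞^{−z}(P, H) ≤ 4·r_opt, where z = |P| − |⋃ⱼ Cⱼ*|. -/
open Finset Metric

/-- deterministic content of Theorem 4: if the sample `S` can be
covered by `k + k'` balls of radius `r_opt`, the returned centers `H` cover `S`
within radius `r ≤ 2·r_opt`, and `S` intersects every optimal cluster (each in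
a ball of radius `r_opt`), then `Δ_∞^{−z}(P,H) ≤ 4·r_opt`, i.e., there is a
subset of `P` of size `|P| − z` all of whose points are within `4·r_opt` of
`H`, where `z = |P| − |⋃ⱼ Cⱼ*|`. -/
theorem stmt_18 {d : ℕ} [DecidableEq (EuclideanSpace ℝ (Fin d))] (k k' z : ℕ)
    (C : Fin k → Finset (EuclideanSpace ℝ (Fin d)))
    (P S H : Finset (EuclideanSpace ℝ (Fin d))) (hH : H.Nonempty)
    (r ropt : ℝ) (hropt : 0 ≤ ropt)
    (hPopt : Finset.univ.biUnion C ⊆ P) (hSP : S ⊆ P)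
    (hz : z = P.card - (Finset.univ.biUnion C).card)
    (hScov : ∃ g : Fin (k + k') → EuclideanSpace ℝ (Fin d),
      ∀ p ∈ S, ∃ i, dist p (g i) ≤ ropt)
    (hHcov : ∀ p ∈ S,
      Metric.infDist p (H : Set (EuclideanSpace ℝ (Fin d))) ≤ r)
    (hr : r ≤ 2 * ropt)
    (o : Fin k → EuclideanSpace ℝ (Fin d))
    (hball : ∀ j, ∀ p ∈ C j, dist p (o j) ≤ ropt)
    (hhit : ∀ j, (S ∩ C j).Nonempty) :
    ∃ P' : Finset (EuclideanSpace ℝ (Fin d)), P' ⊆ P ∧ P'.card + z = P.card ∧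
      ∀ p ∈ P',
        Metric.infDist p (H : Set (EuclideanSpace ℝ (Fin d))) ≤ 4 * ropt := by
  refine ⟨Finset.univ.biUnion C, hPopt, ?_, ?_⟩
  · have hle := Finset.card_le_card hPopt
    omega
  · intro p hp
    simp only [Finset.mem_biUnion, Finset.mem_univ, true_and] at hp
    obtain ⟨j, hpj⟩ := hp
    obtain ⟨s, hs⟩ := hhit j
    rw [Finset.mem_inter] at hs
    calc Metric.infDist p (H : Set (EuclideanSpace ℝ (Fin d)))
        ≤ dist p s + Metric.infDist s (H : Set (EuclideanSpace ℝ (Fin d))) :=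
          by rw [add_comm]; exact Metric.infDist_le_infDist_add_dist
      _ ≤ (dist p (o j) + dist (o j) s) + r := by
          gcongr
          · exact dist_triangle _ _ _
          · exact hHcov s hs.1
      _ ≤ (ropt + ropt) + 2 * ropt := by
          gcongr
          · exact hball j p hpj
          · rw [dist_comm]; exact hball j s hs.2
      _ = 4 * ropt := by ring
end
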